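/- Let w⁽⁰⁾, ξ₁, …, ξ_n ∈ ℝ^d, real coefficients ρ₁,…,ρ_n with |ρᵢ| ≤ α, and suppose ‖ξᵢ‖₂² ≥ σ²d/2 and |⟨ξᵢ, ξ_{i'}⟩| ≤ 2σ²·√(d·L) for all i ≠ i'. Let w = w⁽⁰⁾ + ∑ᵢ ρᵢ·‖ξᵢ‖₂⁻²·ξᵢ and let ξ̃ = D⁻¹·∑_{k∈N} ξ_k for a set N of size D. Then |⟨w − w⁽⁰⁾, ξ̃⟩ − D⁻¹·∑_{k∈N}ρ_k| ≤ 4n·√(L/d)·α. -/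

import Mathlib

/-!
Writing `w - w⁽⁰⁾ = ∑ᵢ ρᵢ ‖ξᵢ‖⁻² ξᵢ`, the inner product with a single `ξ_k` is `ρ_k`
(the diagonal term) plus `n - 1` cross terms, each at most
`α · 2σ²√(dL) / (σ²d/2) = 4√(L/d) α` in absolute value.
Averaging over the neighbourhood `N` preserves this error bound.
-/

open RealInnerProductSpace Finset

section AlmostOrthogonal

variable {ι E : Type*} [Fintype ι] [DecidableEq ι] [NormedAddCommGroup E]
  [InnerProductSpace ℝ E]

theorem inner_sum_normalized_sub_coeff (ρ : ι → ℝ) (ξ : ι → E) {k : ι} (hk : ξ k ≠ 0) :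
    ⟪∑ i, (ρ i / ‖ξ i‖ ^ 2) • ξ i, ξ k⟫ - ρ k =
      ∑ i ∈ univ.erase k, ρ i / ‖ξ i‖ ^ 2 * ⟪ξ i, ξ k⟫ := by
  have hdiag : ρ k / ‖ξ k‖ ^ 2 * ⟪ξ k, ξ k⟫ = ρ k := by
    rw [real_inner_self_eq_norm_sq]
    exact div_mul_cancel₀ _ (by positivity)
  simp only [sum_inner, real_inner_smul_left]
  rw [← sum_erase_add _ _ (mem_univ k), hdiag, add_sub_cancel_right]

theorem abs_div_norm_sq_mul_inner_le {r α c m : ℝ} {x y : E} (hr : |r| ≤ α)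
    (hxy : |⟪x, y⟫| ≤ c) (hm : 0 < m) (hx : m ≤ ‖x‖ ^ 2) :
    |r / ‖x‖ ^ 2 * ⟪x, y⟫| ≤ α * c / m := by
  have hnum : |r| * |⟪x, y⟫| ≤ α * c :=
    mul_le_mul hr hxy (abs_nonneg _) ((abs_nonneg _).trans hr)
  rw [abs_mul, abs_div, abs_of_pos (hm.trans_le hx), div_mul_eq_mul_div]
  exact div_le_div₀ ((by positivity : (0 : ℝ) ≤ |r| * |⟪x, y⟫|).trans hnum) hnum hm hx

theorem abs_inner_sum_normalized_sub_coeff_le {ρ : ι → ℝ} {ξ : ι → E} {α c m : ℝ}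
    (hρ : ∀ i, |ρ i| ≤ α) (hm : 0 < m) (hnorm : ∀ i, m ≤ ‖ξ i‖ ^ 2)
    (hcross : ∀ i j, i ≠ j → |⟪ξ i, ξ j⟫| ≤ c) (k : ι) :
    |⟪∑ i, (ρ i / ‖ξ i‖ ^ 2) • ξ i, ξ k⟫ - ρ k| ≤
      (Fintype.card ι - 1) * (α * c / m) := by
  have hk : ξ k ≠ 0 := fun h => (hm.trans_le (hnorm k)).ne' (by simp [h])
  rw [inner_sum_normalized_sub_coeff ρ ξ hk]
  calc |∑ i ∈ univ.erase k, ρ i / ‖ξ i‖ ^ 2 * ⟪ξ i, ξ k⟫|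
      ≤ ∑ i ∈ univ.erase k, |ρ i / ‖ξ i‖ ^ 2 * ⟪ξ i, ξ k⟫| := abs_sum_le_sum_abs _ _
    _ ≤ ∑ _i ∈ univ.erase k, α * c / m := sum_le_sum fun i hi =>
        abs_div_norm_sq_mul_inner_le (hρ i) (hcross i k (ne_of_mem_erase hi)) hm (hnorm i)
    _ = (Fintype.card ι - 1) * (α * c / m) := by
        rw [sum_const, card_erase_of_mem (mem_univ k), card_univ, nsmul_eq_mul,
          Nat.cast_pred (Fintype.card_pos_iff.2 ⟨k⟩)]

end AlmostOrthogonal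

theorem abs_inv_card_mul_sum_sub_le {ι : Type*} {s : Finset ι} (hs : s.Nonempty)
    {f g : ι → ℝ} {B : ℝ} (h : ∀ k ∈ s, |f k - g k| ≤ B) :
    |(#s : ℝ)⁻¹ * ∑ k ∈ s, f k - (#s : ℝ)⁻¹ * ∑ k ∈ s, g k| ≤ B := by
  have hcard : (0 : ℝ) < #s := by exact_mod_cast hs.card_pos
  rw [← mul_sub, ← sum_sub_distrib, abs_mul, abs_inv, abs_of_pos hcard,
    inv_mul_le_iff₀ hcard]
  calc |∑ k ∈ s, (f k - g k)| ≤ ∑ k ∈ s, |f k - g k| := abs_sum_le_sum_abs _ _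
    _ ≤ ∑ _k ∈ s, B := sum_le_sum h
    _ = #s * B := by rw [sum_const, nsmul_eq_mul]

theorem Real.sqrt_mul_eq_sqrt_div_mul {d : ℝ} (hd : 0 < d) (L : ℝ) :
    √(d * L) = √(L / d) * d := by
  rw [Real.sqrt_mul hd.le, Real.sqrt_div' _ hd.le]
  field_simp
  rw [Real.sq_sqrt hd.le, mul_comm]

theorem stmt_17_general (d n D : ℕ) (hd : 0 < d) (hD : 0 < D)
    (w w0 : EuclideanSpace ℝ (Fin d)) (ξ : Fin n → EuclideanSpace ℝ (Fin d))
    (ρ : Fin n → ℝ) (α σ L : ℝ) (hα : 0 ≤ α) (hσ : 0 < σ)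
    (hρ : ∀ i, |ρ i| ≤ α)
    (hnorm : ∀ i, ‖ξ i‖ ^ 2 ≥ σ ^ 2 * d / 2)
    (hcross : ∀ i i', i ≠ i' → |⟪ξ i, ξ i'⟫| ≤ 2 * σ ^ 2 * Real.sqrt (d * L))
    (N : Finset (Fin n)) (hN : N.card = D)
    (hw : w = w0 + ∑ i, (ρ i / ‖ξ i‖ ^ 2) • ξ i) :
    |⟪w - w0, (D : ℝ)⁻¹ • ∑ k ∈ N, ξ k⟫ - (D : ℝ)⁻¹ * ∑ k ∈ N, ρ k| ≤
      4 * n * Real.sqrt (L / d) * α := by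
  have hd' : (0 : ℝ) < d := by exact_mod_cast hd
  have hm : 0 < σ ^ 2 * d / 2 := by positivity
  have hcross_term : α * (2 * σ ^ 2 * √(d * L)) / (σ ^ 2 * d / 2) = 4 * √(L / d) * α := by
    rw [Real.sqrt_mul_eq_sqrt_div_mul hd']
    field_simp
    ring
  subst hw hN
  rw [add_sub_cancel_left, inner_smul_right, inner_sum]
  refine abs_inv_card_mul_sum_sub_le (card_pos.1 hD) fun k _ => ?_
  calc _ ≤ ((Fintype.card (Fin n) : ℝ) - 1) * (4 * √(L / d) * α) :=
        hcross_term ▸ abs_inner_sum_normalized_sub_coeff_le hρ hm hnorm hcross k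
    _ ≤ n * (4 * √(L / d) * α) := by
        rw [Fintype.card_fin]
        exact mul_le_mul_of_nonneg_right (by linarith) (by positivity)
    _ = 4 * n * √(L / d) * α := by ring

theorem stmt_17 (d n D : ℕ) (hd : 0 < d) (hD : 0 < D)
    (w w0 : EuclideanSpace ℝ (Fin d)) (ξ : Fin n → EuclideanSpace ℝ (Fin d))
    (ρ : Fin n → ℝ) (α σ L : ℝ) (hα : 0 ≤ α) (hσ : 0 < σ) (hL : 0 ≤ L)
    (hρ : ∀ i, |ρ i| ≤ α)
    (hnorm : ∀ i, ‖ξ i‖ ^ 2 ≥ σ ^ 2 * d / 2)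
    (hcross : ∀ i i', i ≠ i' → |⟪ξ i, ξ i'⟫| ≤ 2 * σ ^ 2 * Real.sqrt (d * L))
    (N : Finset (Fin n)) (hN : N.card = D)
    (hw : w = w0 + ∑ i, (ρ i / ‖ξ i‖ ^ 2) • ξ i) :
    |⟪w - w0, (D : ℝ)⁻¹ • ∑ k ∈ N, ξ k⟫ - (D : ℝ)⁻¹ * ∑ k ∈ N, ρ k| ≤
      4 * n * Real.sqrt (L / d) * α :=
  stmt_17_general d n D hd hD w w0 ξ ρ α σ L hα hσ hρ hnorm hcross N hN hw
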